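/- Let n ≥ 3 and let Φ = (φ_1,…,φ_n) be an equiangular tight frame for ℂ^d such that the triple product TP(j,k,ℓ) takes one common value c over all triples of distinct indices j,k,ℓ. Then c is real, and moreover d = 1, or n = d, or n = d + 1. -/

import Mathlib

/-!
Tightness says that the Gram matrix `G` of the frame satisfies `G = (d/n) G²`. On the diagonal
this reads `1 = (d/n)(1 + (n-1)α²)`; an off-diagonal entry, multiplied by its conjugate, reads
`α² = (d/n)(2α² + (n-2)c)`. Conjugation reverses a triple product, so `c` is real, and
`|c| = α³`, so `c = ±α³`. Eliminating `d/n` leaves a quartic in `α` which factors: `α = 0`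
gives `n = d`, `c = α³` forces `α = 1` and `d = 1`, and `c = -α³` forces `(n-1)α = 1` and
`n = d + 1`.
-/

open scoped ComplexInnerProductSpace

noncomputable section

/-- `(φ_1, …, φ_n)` is an equiangular tight frame (ETF) for `ℂ^d`. -/
def IsETF (d n : ℕ) (φ : Fin n → EuclideanSpace ℂ (Fin d)) : Prop :=
  (∀ x : EuclideanSpace ℂ (Fin d), x = ((d : ℂ) / (n : ℂ)) • ∑ j, ⟪φ j, x⟫ • φ j) ∧
  (∀ j, ‖φ j‖ = 1) ∧
  (∃ α : ℝ, 0 ≤ α ∧ ∀ j k, j ≠ k → ‖⟪φ j, φ k⟫‖ = α)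

/-- The triple product `TP(j,k,ℓ) = ⟨φ_j,φ_k⟩⟨φ_k,φ_ℓ⟩⟨φ_ℓ,φ_j⟩`. -/
def TP {d n : ℕ} (φ : Fin n → EuclideanSpace ℂ (Fin d)) (j k l : Fin n) : ℂ :=
  ⟪φ j, φ k⟫ * ⟪φ k, φ l⟫ * ⟪φ l, φ j⟫

theorem eq_one_or_eq_or_eq_add_one_of_gram_equations {N D α r : ℝ} (hN : 1 ≤ N) (hα : 0 ≤ α)
    (hr : |r| = α ^ 3) (hdiag : N = D * (1 + (N - 1) * α ^ 2))
    (hoff : α ^ 2 * N = D * (2 * α ^ 2 + (N - 2) * r)) :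
    D = 1 ∨ N = D ∨ N = D + 1 := by
  rcases hα.eq_or_lt with rfl | hαpos
  · exact Or.inr (Or.inl (by simpa using hdiag))
  have hD : D ≠ 0 := by rintro rfl; linarith [hdiag]
  have hquartic : α ^ 2 + (N - 2) * r - (N - 1) * α ^ 4 = 0 := by
    refine (mul_eq_zero.mp ?_).resolve_left hD
    linear_combination -hoff + α ^ 2 * hdiag
  rcases abs_eq (by positivity : (0 : ℝ) ≤ α ^ 3) |>.mp hr with rfl | rfl
  · have hα1 : (1 - α) * (1 + (N - 1) * α) = 0 := by
      refine (mul_eq_zero.mp ?_).resolve_left (by positivity : α ^ 2 ≠ 0)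
      linear_combination hquartic
    obtain rfl : α = 1 := by rcases mul_eq_zero.mp hα1 with h | h <;> nlinarith
    left
    nlinarith
  · have hNα : (1 + α) * (1 - (N - 1) * α) = 0 := by
      refine (mul_eq_zero.mp ?_).resolve_left (by positivity : α ^ 2 ≠ 0)
      linear_combination hquartic
    replace hNα : (N - 1) * α = 1 := by rcases mul_eq_zero.mp hNα with h | h <;> linarith
    have hDα : (1 + α) * (1 - D * α) = 0 := by
      linear_combination α * hdiag + (D * α ^ 2 - 1) * hNα
    replace hDα : D * α = 1 := by rcases mul_eq_zero.mp hDα with h | h <;> linarith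
    right; right
    nlinarith

section Frame

variable {E ι : Type*} [NormedAddCommGroup E] [InnerProductSpace ℂ E] [Fintype ι] (φ : ι → E)

theorem inner_mul_inner_swap_eq_norm_sq (x y : E) : ⟪x, y⟫ * ⟪y, x⟫ = (‖⟪x, y⟫‖ ^ 2 : ℝ) := by
  rw [← inner_conj_symm y x, Complex.mul_conj, Complex.normSq_eq_norm_sq]

theorem inner_eq_mul_sum_of_reconstruction {a : ℂ} (hframe : ∀ x, x = a • ∑ j, ⟪φ j, x⟫ • φ j)
    (m l : ι) : ⟪φ m, φ l⟫ = a * ∑ k, ⟪φ m, φ k⟫ * ⟪φ k, φ l⟫ := by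
  conv_lhs => rw [hframe (φ l)]
  simp only [inner_smul_right, inner_sum, mul_comm]

variable {φ} {α : ℝ} (hnorm : ∀ j, ‖φ j‖ = 1) (hα : ∀ j k, j ≠ k → ‖⟪φ j, φ k⟫‖ = α)
include hnorm hα

theorem sum_inner_mul_inner_self_of_equiangular (m : ι) :
    ∑ k, ⟪φ m, φ k⟫ * ⟪φ k, φ m⟫ = 1 + ((Fintype.card ι : ℂ) - 1) * (α ^ 2 : ℝ) := by
  have hoff : ∀ k, k ≠ m → ⟪φ m, φ k⟫ * ⟪φ k, φ m⟫ - (α ^ 2 : ℝ) = 0 := fun k hk => by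
    rw [inner_mul_inner_swap_eq_norm_sq, hα m k hk.symm, sub_self]
  have := Fintype.sum_eq_single m hoff
  rw [Finset.sum_sub_distrib, Finset.sum_const, Finset.card_univ,
    inner_self_eq_one_of_norm_eq_one (hnorm m), nsmul_eq_mul] at this
  linear_combination this

theorem sum_inner_mul_inner_mul_inner_of_equiangular {m l : ι} (hml : m ≠ l) {c : ℂ}
    (hc : ∀ k, k ≠ m → k ≠ l → ⟪φ m, φ k⟫ * ⟪φ k, φ l⟫ * ⟪φ l, φ m⟫ = c) :
    ∑ k, ⟪φ m, φ k⟫ * ⟪φ k, φ l⟫ * ⟪φ l, φ m⟫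
      = 2 * (α ^ 2 : ℝ) + ((Fintype.card ι : ℂ) - 2) * c := by
  have hswap : ⟪φ m, φ l⟫ * ⟪φ l, φ m⟫ = (α ^ 2 : ℝ) := by
    rw [inner_mul_inner_swap_eq_norm_sq, hα m l hml]
  have := Fintype.sum_eq_add (f := fun k => ⟪φ m, φ k⟫ * ⟪φ k, φ l⟫ * ⟪φ l, φ m⟫ - c) m l hml
    fun k hk => sub_eq_zero.mpr (hc k hk.1 hk.2)
  rw [Finset.sum_sub_distrib, Finset.sum_const, Finset.card_univ, nsmul_eq_mul,
    inner_self_eq_one_of_norm_eq_one (hnorm m), inner_self_eq_one_of_norm_eq_one (hnorm l)] at this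
  linear_combination this + 2 * hswap

end Frame

theorem conj_TP {d n : ℕ} (φ : Fin n → EuclideanSpace ℂ (Fin d)) (j k l : Fin n) :
    starRingEnd ℂ (TP φ j k l) = TP φ j l k := by
  simp only [TP, map_mul, inner_conj_symm]
  ring

theorem norm_TP_of_equiangular {d n : ℕ} {φ : Fin n → EuclideanSpace ℂ (Fin d)} {α : ℝ}
    (hα : ∀ j k, j ≠ k → ‖⟪φ j, φ k⟫‖ = α) {j k l : Fin n} (hjk : j ≠ k) (hjl : j ≠ l)
    (hkl : k ≠ l) : ‖TP φ j k l‖ = α ^ 3 := by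
  rw [TP, norm_mul, norm_mul, hα _ _ hjk, hα _ _ hkl, hα _ _ hjl.symm]
  ring

theorem etf_common_triple_product {d n : ℕ} (hn : 3 ≤ n)
    (φ : Fin n → EuclideanSpace ℂ (Fin d)) (hETF : IsETF d n φ) (c : ℂ)
    (hc : ∀ j k l : Fin n, j ≠ k → j ≠ l → k ≠ l → TP φ j k l = c) :
    (∃ r : ℝ, c = (r : ℂ)) ∧ (d = 1 ∨ n = d ∨ n = d + 1) := by
  obtain ⟨hframe, hnorm, α, hα0, hα⟩ := hETF
  obtain ⟨i₀, i₁, i₂, h01, h02, h12⟩ :=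
    Fintype.two_lt_card_iff.mp (by rw [Fintype.card_fin]; omega : 2 < Fintype.card (Fin n))
  have hconj := conj_TP φ i₀ i₁ i₂
  rw [hc i₀ i₁ i₂ h01 h02 h12, hc i₀ i₂ i₁ h02 h01 h12.symm] at hconj
  obtain ⟨r, rfl⟩ := Complex.conj_eq_iff_real.mp hconj
  refine ⟨⟨r, rfl⟩, ?_⟩
  have hr : |r| = α ^ 3 := by
    rw [← Real.norm_eq_abs, ← Complex.norm_real, ← hc i₀ i₁ i₂ h01 h02 h12,
      norm_TP_of_equiangular hα h01 h02 h12]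
  have hdiag := inner_eq_mul_sum_of_reconstruction φ hframe i₀ i₀
  rw [inner_self_eq_one_of_norm_eq_one (hnorm i₀),
    sum_inner_mul_inner_self_of_equiangular hnorm hα, Fintype.card_fin] at hdiag
  have hoff := congrArg (· * ⟪φ i₁, φ i₀⟫) (inner_eq_mul_sum_of_reconstruction φ hframe i₀ i₁)
  simp only [mul_assoc _ (∑ k, _), Finset.sum_mul] at hoff
  rw [inner_mul_inner_swap_eq_norm_sq, hα _ _ h01,
    sum_inner_mul_inner_mul_inner_of_equiangular hnorm hα h01
      fun k hk0 hk1 => hc i₀ k i₁ hk0.symm h01 hk1, Fintype.card_fin] at hoff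
  have hn0 : (n : ℂ) ≠ 0 := by exact_mod_cast (by omega : n ≠ 0)
  field_simp at hdiag hoff
  have hdiagℝ : (n : ℝ) = d * (1 + (n - 1) * α ^ 2) := by exact_mod_cast hdiag
  have hoffℝ : α ^ 2 * n = (d : ℝ) * (2 * α ^ 2 + (n - 2) * r) := by
    exact_mod_cast (show ((α ^ 2 * n : ℝ) : ℂ) = ((d * (2 * α ^ 2 + (n - 2) * r) : ℝ) : ℂ) by
      push_cast at hoff ⊢; linear_combination hoff)
  exact_mod_cast eq_one_or_eq_or_eq_add_one_of_gram_equations (by norm_cast; omega) hα0 hr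
    hdiagℝ hoffℝ
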